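/- Let G be a connected digraph with nonnegative integer arc weights ω, let T be an optimal DCPP solution on G and let W be any DCPP solution on G. For each arc a of G let ρ(a) = μ_{G_W}(a) − μ_{G_T}(a), where μ_{G_T}(a) and μ_{G_W}(a) denote the multiplicities of a in G_T and G_W. Let H be the directed multigraph on V(G) that contains, for each arc uv of G with ρ(uv) > 0, ρ(uv) copies of the arc uv (called positive arcs, each of weight ω(uv)), and, for each arc uv of G with ρ(uv) < 0, |ρ(uv)| copies of the reversed arc vu (called negative arcs, each of weight ω(uv)). Define the weight of a directed cycle C in H as the sum of the weights of its positive arcs minus the sum of the weights of its negative arcs. Then every directed cycle in H has nonnegative weight. -/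

import Mathlib

/-!
Statement 9: Let G be a connected digraph with nonnegative integer arc weights ω, let T
be an optimal DCPP solution on G and let W be any DCPP solution on G.  For each arc a of
G let ρ(a) = μ_{G_W}(a) − μ_{G_T}(a).  Let H be the directed multigraph containing, for
each arc uv of G with ρ(uv) > 0, ρ(uv) copies of the positive arc uv (each of weight
ω(uv)), and for each arc uv of G with ρ(uv) < 0, |ρ(uv)| copies of the reversed negative
arc vu (each of weight ω(uv)).  The weight of a directed cycle in H is the sum of the
weights of its positive arcs minus the sum of the weights of its negative arcs.  Then
every directed cycle in H has nonnegative weight.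

A directed cycle of H is represented as a list `L` of pairs `(arc of H, label)`, where
the label `true` marks a positive arc and `false` a negative arc; the underlying arc list
`L.map Prod.fst` must form a directed cycle (non-empty, consecutive, closed, with
pairwise distinct vertices).
-/

/-- `L` is the arc list of a (possibly empty) closed directed walk in the digraph
with arc set `A`. -/
def IsClosedWalk {V : Type} (A : Finset (V × V)) (L : List (V × V)) : Prop :=
  (∀ a ∈ L, a ∈ A) ∧ List.Chain' (fun p q => p.2 = q.1) L ∧
    L.getLast?.map Prod.snd = L.head?.map Prod.fst

/-- The underlying undirected (simple) graph of a digraph. -/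
def UGraph {V : Type} (A : Finset (V × V)) : SimpleGraph V :=
  SimpleGraph.fromRel (fun u v => (u, v) ∈ A)

/-- Weight of a walk: sum of the weights of all traversed arcs, counted with
multiplicity. -/
def walkWeight {V : Type} (ω : V × V → ℕ) (L : List (V × V)) : ℕ := (L.map ω).sum

/-- A DCPP solution: a closed directed walk traversing every arc at least once. -/
def IsDCPP {V : Type} (A : Finset (V × V)) (L : List (V × V)) : Prop :=
  IsClosedWalk A L ∧ ∀ a ∈ A, a ∈ L


/-!
Add the positive arcs of the cycle to `G_T` and delete its negative arcs. Every vertex stays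
balanced, because the cycle, read with its negative arcs turned back, is itself balanced. Every
arc of `G` keeps multiplicity at least one, because a negative arc `a` has
`μ_{G_T}(a) > μ_{G_W}(a) ≥ 1` and the cycle uses it only once. By Euler's theorem for connected
balanced multigraphs, the result is traversed by a DCPP solution whose weight is `ω(T)` plus
the weight of the cycle, and the optimality of `T` makes that weight nonnegative.
-/

section ArcWalk

variable {V : Type}

def IsArcWalk : V → V → List (V × V) → Prop
  | u, w, [] => u = w
  | u, w, a :: l => a.1 = u ∧ IsArcWalk a.2 w l

def IsBalanced (M : Multiset (V × V)) : Prop :=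
  M.map Prod.fst = M.map Prod.snd

lemma isArcWalk_cons_iff (a : V × V) (l : List (V × V)) (w : V) :
    IsArcWalk a.1 w (a :: l) ↔
      (a :: l).IsChain (fun p q => p.2 = q.1) ∧
        ((a :: l).getLast (List.cons_ne_nil a l)).2 = w := by
  induction l generalizing a with
  | nil => simp [IsArcWalk]
  | cons b l ih =>
    simp only [IsArcWalk, true_and] at ih ⊢
    rw [ih, List.isChain_cons_cons, List.getLast_cons_cons, and_assoc, eq_comm]

lemma isArcWalk_cons_iff_chain_closed (a : V × V) (l : List (V × V)) :
    IsArcWalk a.1 a.1 (a :: l) ↔ (a :: l).IsChain (fun p q => p.2 = q.1) ∧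
      (a :: l).getLast?.map Prod.snd = (a :: l).head?.map Prod.fst := by
  rw [isArcWalk_cons_iff, List.getLast?_eq_some_getLast (List.cons_ne_nil a l)]
  simp

lemma IsArcWalk.chain_closed {v : V} {l : List (V × V)} (h : IsArcWalk v v l) :
    l.IsChain (fun p q => p.2 = q.1) ∧ l.getLast?.map Prod.snd = l.head?.map Prod.fst := by
  cases l with
  | nil => exact ⟨List.isChain_nil, rfl⟩
  | cons a l =>
    obtain rfl : a.1 = v := h.1
    exact (isArcWalk_cons_iff_chain_closed a l).1 h

lemma IsArcWalk.append {u v w : V} {l₁ l₂ : List (V × V)} (h₁ : IsArcWalk u v l₁)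
    (h₂ : IsArcWalk v w l₂) : IsArcWalk u w (l₁ ++ l₂) := by
  induction l₁ generalizing u with
  | nil => obtain rfl : u = v := h₁; exact h₂
  | cons a l ih => exact ⟨h₁.1, ih h₁.2⟩

lemma IsArcWalk.exists_of_append {u w : V} {l₁ l₂ : List (V × V)}
    (h : IsArcWalk u w (l₁ ++ l₂)) : ∃ v, IsArcWalk u v l₁ ∧ IsArcWalk v w l₂ := by
  induction l₁ generalizing u with
  | nil => exact ⟨u, rfl, h⟩
  | cons a l ih =>
    obtain ⟨v, hl, hv⟩ := ih h.2
    exact ⟨v, ⟨h.1, hl⟩, hv⟩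

lemma IsArcWalk.cons_map_snd_eq {u w : V} {l : List (V × V)} (h : IsArcWalk u w l) :
    u ::ₘ (l : Multiset (V × V)).map Prod.snd =
      w ::ₘ (l : Multiset (V × V)).map Prod.fst := by
  induction l generalizing u with
  | nil => obtain rfl : u = w := h; rfl
  | cons a l ih =>
    obtain ⟨rfl, h⟩ := h
    simp only [← Multiset.cons_coe, Multiset.map_cons]
    rw [ih h, Multiset.cons_swap]

lemma IsArcWalk.isBalanced {v : V} {l : List (V × V)} (h : IsArcWalk v v l) :
    IsBalanced (l : Multiset (V × V)) :=
  ((Multiset.cons_inj_right v).1 h.cons_map_snd_eq).symm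

lemma isBalanced_coe_of_chain_closed {l : List (V × V)}
    (hc : l.IsChain (fun p q => p.2 = q.1))
    (hcl : l.getLast?.map Prod.snd = l.head?.map Prod.fst) :
    IsBalanced (l : Multiset (V × V)) := by
  cases l with
  | nil => rfl
  | cons a l => exact ((isArcWalk_cons_iff_chain_closed a l).2 ⟨hc, hcl⟩).isBalanced

lemma IsBalanced.of_add_left {M N : Multiset (V × V)} (hMN : IsBalanced (M + N))
    (hM : IsBalanced M) : IsBalanced N := by
  unfold IsBalanced at *
  rw [Multiset.map_add, Multiset.map_add, hM] at hMN
  exact add_left_cancel hMN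

end ArcWalk

lemma SimpleGraph.Reachable.mem_of_adj_closed {V : Type} {G : SimpleGraph V} {S : Set V}
    (hS : ∀ x y, G.Adj x y → x ∈ S → y ∈ S) {u v : V} (h : G.Reachable u v)
    (hu : u ∈ S) : v ∈ S := by
  rw [SimpleGraph.reachable_iff_reflTransGen] at h
  induction h with
  | refl => exact hu
  | tail _ hxy ih => exact hS _ _ hxy ih

section Euler

variable {V : Type} [DecidableEq V]

lemma exists_isArcWalk_le (M : Multiset (V × V)) {u w : V}
    (h : u ::ₘ M.map Prod.snd = w ::ₘ M.map Prod.fst) :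
    ∃ l : List (V × V), (l : Multiset (V × V)) ≤ M ∧ IsArcWalk u w l := by
  induction M using Multiset.strongInductionOn generalizing u with
  | ih M ih =>
  by_cases huw : u = w
  · exact ⟨[], Multiset.zero_le M, huw⟩
  -- otherwise `u` has more outgoing than incoming arcs in `M`: leave it along one of them
  have hu : u ∈ M.map Prod.fst :=
    (Multiset.mem_cons.1 (h ▸ Multiset.mem_cons_self u _)).resolve_left huw
  obtain ⟨a, haM, rfl⟩ := Multiset.mem_map.1 hu
  rw [← Multiset.cons_erase haM, Multiset.map_cons, Multiset.map_cons, Multiset.cons_swap w,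
    Multiset.cons_inj_right] at h
  obtain ⟨l, hl, hwalk⟩ := ih _ (Multiset.erase_lt.2 haM) h
  refine ⟨a :: l, ?_, rfl, hwalk⟩
  rw [← Multiset.cons_coe, ← Multiset.cons_erase haM]
  exact Multiset.cons_le_cons a hl

lemma IsBalanced.exists_isArcWalk_cons_le {M : Multiset (V × V)} (hM : IsBalanced M)
    {a : V × V} (ha : a ∈ M) :
    ∃ l : List (V × V), ((a :: l : List (V × V)) : Multiset (V × V)) ≤ M ∧
      IsArcWalk a.1 a.1 (a :: l) := by
  have h : a.2 ::ₘ (M.erase a).map Prod.snd = a.1 ::ₘ (M.erase a).map Prod.fst := by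
    rw [← Multiset.cons_inj_right a.1, ← Multiset.map_cons Prod.snd,
      ← Multiset.map_cons Prod.fst, Multiset.cons_erase ha, hM]
  obtain ⟨l, hl, hwalk⟩ := exists_isArcWalk_le (M.erase a) h
  refine ⟨l, ?_, rfl, hwalk⟩
  rw [← Multiset.cons_coe, ← Multiset.cons_erase ha]
  exact Multiset.cons_le_cons a hl

lemma exists_fst_eq_of_preconnected {C M : Multiset (V × V)}
    (hconn : (UGraph (C + M).toFinset).Preconnected) (hC : IsBalanced C) (hM : IsBalanced M)
    (hC0 : C ≠ 0) (hM0 : M ≠ 0) : ∃ a ∈ M, ∃ b ∈ C, b.1 = a.1 := by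
  by_contra! hout
  -- then no arc of `M` touches the vertices of `C`, so they form a union of components of
  -- the underlying graph which misses the tails of the arcs of `M`
  have hin : ∀ a ∈ M, a.2 ∉ C.map Prod.fst := by
    intro a ha h2
    have : a.2 ∈ M.map Prod.fst := hM ▸ Multiset.mem_map_of_mem _ ha
    obtain ⟨b, hb, hb1⟩ := Multiset.mem_map.1 this
    obtain ⟨c, hc, hc1⟩ := Multiset.mem_map.1 h2
    exact hout b hb c hc (hc1.trans hb1.symm)
  have harc : ∀ c ∈ C + M, c.1 ∈ C.map Prod.fst ↔ c.2 ∈ C.map Prod.fst := by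
    intro c hc
    rcases Multiset.mem_add.1 hc with hc | hc
    · exact iff_of_true (Multiset.mem_map_of_mem _ hc) (hC ▸ Multiset.mem_map_of_mem _ hc)
    · refine iff_of_false ?_ (hin c hc)
      rintro h
      obtain ⟨b, hb, hb1⟩ := Multiset.mem_map.1 h
      exact hout c hc b hb hb1
  have hclosed : ∀ x y, (UGraph (C + M).toFinset).Adj x y →
      x ∈ {x | x ∈ C.map Prod.fst} → y ∈ {x | x ∈ C.map Prod.fst} := by
    rintro x y ⟨-, hxy | hyx⟩ hx
    · exact (harc _ (Multiset.mem_toFinset.1 hxy)).1 hx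
    · exact (harc _ (Multiset.mem_toFinset.1 hyx)).2 hx
  obtain ⟨a, ha⟩ := Multiset.exists_mem_of_ne_zero hM0
  obtain ⟨b, hb⟩ := Multiset.exists_mem_of_ne_zero hC0
  have : a.1 ∈ C.map Prod.fst :=
    (hconn b.1 a.1).mem_of_adj_closed hclosed (Multiset.mem_map_of_mem _ hb)
  obtain ⟨c, hc, hc1⟩ := Multiset.mem_map.1 this
  exact hout a ha c hc hc1

lemma exists_isArcWalk_coe_eq_of_le {N : Multiset (V × V)} (hN : IsBalanced N)
    (hconn : (UGraph N.toFinset).Preconnected) {C : List (V × V)} {u : V}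
    (hC : IsArcWalk u u C) (hCne : C ≠ []) (hCN : (C : Multiset (V × V)) ≤ N) :
    ∃ (v : V) (L : List (V × V)), IsArcWalk v v L ∧ (L : Multiset (V × V)) = N := by
  induction hn : Multiset.card (N - (C : Multiset (V × V))) using Nat.strong_induction_on
    generalizing C u with
  | _ n ih =>
  set M := N - (C : Multiset (V × V))
  have hCM : ↑C + M = N := add_tsub_cancel_of_le hCN
  have hM : IsBalanced M := (hCM ▸ hN).of_add_left hC.isBalanced
  rcases eq_or_ne M 0 with hM0 | hM0
  · exact ⟨u, C, hC, by rw [← hCM, hM0, add_zero]⟩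
  obtain ⟨a, haM, b, hbC, hba⟩ :=
    exists_fst_eq_of_preconnected (hCM ▸ hconn) hC.isBalanced hM (by simpa using hCne) hM0
  obtain ⟨D, hDM, hD⟩ := hM.exists_isArcWalk_cons_le haM
  obtain ⟨s, t, rfl⟩ := List.append_of_mem (Multiset.mem_coe.1 hbC)
  obtain ⟨v, hs, hbt⟩ := hC.exists_of_append
  obtain rfl : b.1 = v := hbt.1
  -- splice the closed walk `a :: D` into `C`, rotated to start at `b`
  have hwalk : IsArcWalk a.1 a.1 ((a :: D) ++ (b :: t ++ s)) := hD.append (hba ▸ hbt.append hs)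
  have hcoe : (((a :: D) ++ (b :: t ++ s) : List (V × V)) : Multiset (V × V)) =
      ↑(a :: D) + ↑(s ++ b :: t) := by
    rw [Multiset.coe_add, Multiset.coe_eq_coe]
    exact List.perm_append_comm.append_left _
  refine ih _ ?_ hwalk (by simp) ?_ rfl
  · rw [← hn, hcoe, ← hCM, add_comm (↑(a :: D) : Multiset (V × V)),
      add_tsub_add_eq_tsub_left, Multiset.card_sub hDM]
    have := Multiset.card_le_card hDM
    simp only [Multiset.coe_card, List.length_cons] at this ⊢
    omega
  · rw [hcoe, ← hCM, add_comm]
    exact add_le_add_right hDM _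

theorem IsBalanced.exists_isClosedWalk_coe_eq {N : Multiset (V × V)} (hN : IsBalanced N)
    (hconn : (UGraph N.toFinset).Preconnected) :
    ∃ L, IsClosedWalk N.toFinset L ∧ (L : Multiset (V × V)) = N := by
  rcases N.empty_or_exists_mem with rfl | ⟨a, ha⟩
  · exact ⟨[], ⟨by simp, List.isChain_nil, rfl⟩, rfl⟩
  obtain ⟨D, hDN, hD⟩ := hN.exists_isArcWalk_cons_le ha
  obtain ⟨v, L, hL, rfl⟩ := exists_isArcWalk_coe_eq_of_le hN hconn hD (List.cons_ne_nil _ _) hDN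
  exact ⟨L, ⟨fun b hb => by simpa using hb, hL.chain_closed⟩, rfl⟩

end Euler

section ResidualCycle

variable {V : Type}

def posArcs (S : Multiset ((V × V) × Bool)) : Multiset (V × V) :=
  (S.filter (fun p => p.2 = true)).map Prod.fst

/-- Negative arcs are recorded with the orientation of the arc of `G` they come from. -/
def negArcs (S : Multiset ((V × V) × Bool)) : Multiset (V × V) :=
  (S.filter (fun p => p.2 = false)).map (fun p => p.1.swap)

lemma map_fst_eq_posArcs_add_negArcs (S : Multiset ((V × V) × Bool)) :
    S.map Prod.fst = posArcs S + (negArcs S).map Prod.swap := by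
  conv_lhs => rw [← Multiset.filter_add_not (fun p => p.2 = true) S]
  simp [posArcs, negArcs, Multiset.map_map]

lemma sum_map_signed_eq (ω : V × V → ℕ) (S : Multiset ((V × V) × Bool)) :
    (S.map (fun p => if p.2 = true then (ω p.1 : ℤ) else -(ω (p.1.2, p.1.1) : ℤ))).sum =
      (((posArcs S).map ω).sum : ℤ) - (((negArcs S).map ω).sum : ℤ) := by
  induction S using Multiset.induction_on with
  | empty => simp [posArcs, negArcs]
  | cons p S ih =>
    obtain ⟨a, _ | _⟩ := p <;>
      simp only [posArcs, negArcs, Multiset.filter_cons] at ih ⊢ <;> simp [ih, Prod.swap] <;> ring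

lemma nodup_negArcs {S : Multiset ((V × V) × Bool)} (h : (S.map fun p => p.1.1).Nodup) :
    (negArcs S).Nodup := by
  refine Multiset.Nodup.of_map Prod.snd ?_
  rw [negArcs, Multiset.map_map]
  exact Multiset.nodup_of_le (Multiset.map_le_map (Multiset.filter_le _ _)) h

/-- Augmenting a balanced multigraph along a cycle of its residual graph keeps it balanced. -/
lemma IsBalanced.add_tsub [DecidableEq V] {X Y Z : Multiset (V × V)} (hX : IsBalanced X)
    (hYZ : IsBalanced (Y + Z.map Prod.swap)) (hZ : Z ≤ X + Y) : IsBalanced (X + Y - Z) := by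
  have hYZ' : Y.map Prod.fst + Z.map Prod.snd = Y.map Prod.snd + Z.map Prod.fst := by
    rw [IsBalanced, Multiset.map_add, Multiset.map_add, Multiset.map_map, Multiset.map_map] at hYZ
    exact hYZ
  have hsum := tsub_add_cancel_of_le hZ
  have h₁ := congrArg (Multiset.map Prod.fst) hsum
  have h₂ := congrArg (Multiset.map Prod.snd) hsum
  simp only [Multiset.map_add] at h₁ h₂
  ext v
  have := congrArg (Multiset.count v) h₁
  have := congrArg (Multiset.count v) h₂
  have := congrArg (Multiset.count v) hX
  have := congrArg (Multiset.count v) hYZ'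
  simp only [Multiset.count_add] at *
  omega

end ResidualCycle

lemma IsDCPP.exists_isDCPP_add_eq_add {V : Type} [DecidableEq V] {A : Finset (V × V)}
    {T : List (V × V)} (hconn : (UGraph A).Connected) (hT : IsDCPP A T) {P Ng : Multiset (V × V)}
    (hP : ∀ a ∈ P, a ∈ A) (hNg : Ng.Nodup)
    (hNgT : ∀ a ∈ Ng, a ∈ A ∧ 1 < Multiset.count a (T : Multiset (V × V)))
    (hcyc : IsBalanced (P + Ng.map Prod.swap)) :
    ∃ T', IsDCPP A T' ∧ (T' : Multiset (V × V)) + Ng = ↑T + P := by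
  obtain ⟨⟨hTA, hTchain, hTclosed⟩, hTcov⟩ := hT
  have hlt : ∀ a ∈ A, Ng.count a < Multiset.count a (T : Multiset (V × V)) := by
    intro a ha
    by_cases haNg : a ∈ Ng
    · rw [Multiset.count_eq_one_of_mem hNg haNg]; exact (hNgT a haNg).2
    · rw [Multiset.count_eq_zero.2 haNg]; exact Multiset.count_pos.2 (hTcov a ha)
  have hle : Ng ≤ ↑T + P := by
    refine le_add_right (Multiset.le_iff_count.2 fun a => ?_)
    by_cases ha : a ∈ A
    · exact (hlt a ha).le
    · rw [Multiset.count_eq_zero.2 fun h => ha (hNgT a h).1]; exact Nat.zero_le _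
  have hsupp : (↑T + P - Ng).toFinset = A := by
    ext a
    rw [Multiset.mem_toFinset, Multiset.mem_sub, Multiset.count_add]
    refine ⟨fun h => ?_, fun ha => (hlt a ha).trans_le (Nat.le_add_right _ _)⟩
    have : a ∈ (↑T + P : Multiset (V × V)) :=
      Multiset.count_pos.1 (by rw [Multiset.count_add]; omega)
    rcases Multiset.mem_add.1 this with h | h
    exacts [hTA a (Multiset.mem_coe.1 h), hP a h]
  have hbal : IsBalanced ((T : Multiset (V × V)) + P - Ng) :=
    (isBalanced_coe_of_chain_closed hTchain hTclosed).add_tsub hcyc hle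
  obtain ⟨T', hT', hT'eq⟩ := hbal.exists_isClosedWalk_coe_eq (hsupp ▸ hconn.preconnected)
  refine ⟨T', ⟨hsupp ▸ hT', fun a ha => ?_⟩, by rw [hT'eq, tsub_add_cancel_of_le hle]⟩
  rw [← Multiset.mem_coe, hT'eq, ← Multiset.mem_toFinset, hsupp]
  exact ha

/-- `List.count` on pairs uses the componentwise `BEq` instance, `Multiset.count` the
`DecidableEq` one. -/
lemma Multiset.coe_count_prod {α β : Type} [DecidableEq α] [DecidableEq β] (a : α × β)
    (l : List (α × β)) : Multiset.count a (l : Multiset (α × β)) = l.count a := by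
  rw [Multiset.coe_count, lawful_beq_subsingleton instBEqProd instBEqOfDecidableEq]

theorem stmt9_general {V : Type} [DecidableEq V] (A : Finset (V × V))
    (ω : V × V → ℕ) (hconn : (UGraph A).Connected)
    (T : List (V × V)) (hT : IsDCPP A T)
    (hTopt : ∀ T' : List (V × V), IsDCPP A T' → walkWeight ω T ≤ walkWeight ω T')
    (W : List (V × V)) (hW : IsDCPP A W)
    -- a directed cycle in H :
    (L : List ((V × V) × Bool))
    (harcs : ∀ p ∈ L,
      (p.2 = true → p.1 ∈ A ∧ T.count p.1 < W.count p.1) ∧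
      (p.2 = false → (p.1.2, p.1.1) ∈ A ∧ W.count (p.1.2, p.1.1) < T.count (p.1.2, p.1.1)))
    (hchain : List.Chain' (fun p q => p.2 = q.1) (L.map Prod.fst))
    (hclosed : (L.map Prod.fst).getLast?.map Prod.snd = (L.map Prod.fst).head?.map Prod.fst)
    (hnodup : ((L.map Prod.fst).map Prod.fst).Nodup) :
    0 ≤ (L.map (fun p => if p.2 = true then (ω p.1 : ℤ) else -(ω (p.1.2, p.1.1) : ℤ))).sum := by
  rw [← Multiset.sum_coe, ← Multiset.map_coe, sum_map_signed_eq]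
  set S := (L : Multiset ((V × V) × Bool))
  have hpos : ∀ a ∈ posArcs S, a ∈ A := by
    simp only [posArcs, S, Multiset.mem_map, Multiset.mem_filter, Multiset.mem_coe]
    rintro _ ⟨p, ⟨hp, hp2⟩, rfl⟩
    exact ((harcs p hp).1 hp2).1
  have hneg : ∀ a ∈ negArcs S, a ∈ A ∧ 1 < Multiset.count a (T : Multiset (V × V)) := by
    simp only [negArcs, S, Multiset.mem_map, Multiset.mem_filter, Multiset.mem_coe]
    rintro _ ⟨p, ⟨hp, hp2⟩, rfl⟩
    obtain ⟨hA, hlt⟩ := (harcs p hp).2 hp2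
    have hWpos := List.count_pos_iff.2 (hW.2 _ hA)
    exact ⟨hA, by rw [Multiset.coe_count_prod]; change 1 < T.count (p.1.2, p.1.1); omega⟩
  have hcyc : IsBalanced (posArcs S + (negArcs S).map Prod.swap) := by
    rw [← map_fst_eq_posArcs_add_negArcs, Multiset.map_coe]
    exact isBalanced_coe_of_chain_closed hchain hclosed
  obtain ⟨T', hT', hT'eq⟩ := hT.exists_isDCPP_add_eq_add hconn hpos
    (nodup_negArcs (by simpa [S, Function.comp_def] using hnodup)) hneg hcyc
  have hweight := congrArg (fun M => (M.map ω).sum) hT'eq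
  simp only [Multiset.map_add, Multiset.sum_add, Multiset.map_coe, Multiset.sum_coe] at hweight
  have hopt := hTopt T' hT'
  unfold walkWeight at hopt
  omega

theorem stmt9 {V : Type} [Fintype V] [DecidableEq V] (A : Finset (V × V))
    (ω : V × V → ℕ) (hloop : ∀ v : V, (v, v) ∉ A) (hconn : (UGraph A).Connected)
    (T : List (V × V)) (hT : IsDCPP A T)
    (hTopt : ∀ T' : List (V × V), IsDCPP A T' → walkWeight ω T ≤ walkWeight ω T')
    (W : List (V × V)) (hW : IsDCPP A W)
    -- a directed cycle in H :
    (L : List ((V × V) × Bool)) (hne : L ≠ [])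
    (harcs : ∀ p ∈ L,
      (p.2 = true → p.1 ∈ A ∧ T.count p.1 < W.count p.1) ∧
      (p.2 = false → (p.1.2, p.1.1) ∈ A ∧ W.count (p.1.2, p.1.1) < T.count (p.1.2, p.1.1)))
    (hchain : List.Chain' (fun p q => p.2 = q.1) (L.map Prod.fst))
    (hclosed : (L.map Prod.fst).getLast?.map Prod.snd = (L.map Prod.fst).head?.map Prod.fst)
    (hnodup : ((L.map Prod.fst).map Prod.fst).Nodup) :
    0 ≤ (L.map (fun p => if p.2 = true then (ω p.1 : ℤ) else -(ω (p.1.2, p.1.1) : ℤ))).sum :=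
  stmt9_general A ω hconn T hT hTopt W hW L harcs hchain hclosed hnodup
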